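/- arXiv:2205.07608 — 2 statements merged into one kernel-verified Lean document; each statement's English description precedes it below -/
import Mathlib

section
/- Let (e₁,…,e_n) be an orthonormal basis of X, Ω = e₁∧⋯∧e_n, ⋆_R M = M⌟Ω, ⋆_L M = Ω⌞M, and define the regressive product M∨N := ⋆_L(⋆_R M ∧ ⋆_R N). For nonzero blades A, B ∈ ⋀X: A∨B ≠ 0 if and only if [A] + [B] = X; and if A∨B ≠ 0, then A∨B is a blade with {v ∈ X : v∧(A∨B) = 0} = [A] ∩ [B]. -/
open scoped RealInnerProductSpace

/-- The blade `v₁ ∧ ⋯ ∧ v_k` in the exterior algebra. -/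
noncomputable def expBlade {X : Type*} [AddCommGroup X] [Module ℝ X] {k : ℕ}
    (v : Fin k → X) : ExteriorAlgebra ℝ X :=
  (List.ofFn fun i => ExteriorAlgebra.ι ℝ (v i)).prod

/-- A blade: a scalar, or an exterior product of vectors. -/
def IsBlade {X : Type*} [AddCommGroup X] [Module ℝ X] (B : ExteriorAlgebra ℝ X) : Prop :=
  (∃ r : ℝ, B = algebraMap ℝ (ExteriorAlgebra ℝ X) r) ∨
    ∃ (k : ℕ) (v : Fin k → X), B = (List.ofFn fun i => ExteriorAlgebra.ι ℝ (v i)).prod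

/-!
If `f` is an orthonormal basis of `[A]` and `g` one of `[A]ᗮ`, then `A = c • ∧f` and
`Ω = d • ∧f ∧ ∧g` with `c, d ≠ 0`, so `⋆_R A = cd • ∧g`: the complement of a nonzero blade is a
nonzero blade of the orthogonal complement, and likewise for `⋆_L`. Hence `⋆_R A ∧ ⋆_R B` is the
wedge of bases of `[A]ᗮ` and `[B]ᗮ`. It vanishes iff these meet, i.e. iff `[A] + [B] ≠ X`;
otherwise it is a blade of `[A]ᗮ ⊕ [B]ᗮ = ([A] ∩ [B])ᗮ`, which `⋆_L` sends to a nonzero blade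
`∧h` of `[A] ∩ [B]`, and `x ∧ ∧h = 0` iff `x ∈ span h`.
-/

open ExteriorAlgebra Submodule Set InnerProductSpace

theorem AlternatingMap.apply_eq_basis_det_smul {R M N ι : Type*} [CommRing R] [AddCommGroup M]
    [Module R M] [AddCommGroup N] [Module R N] [Fintype ι] [DecidableEq ι]
    (f : M [⋀^ι]→ₗ[R] N) (b : Module.Basis ι R M) (u : ι → M) : f u = b.det u • f b := by
  suffices f = (LinearMap.toSpanSingleton R N (f b)).compAlternatingMap b.det by
    rw [this]; simp [Module.Basis.det_self]
  refine b.ext_alternating fun σ hσ => ?_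
  let τ : Equiv.Perm ι := Equiv.ofBijective σ (Finite.injective_iff_bijective.1 hσ)
  change f (b ∘ τ) = b.det (b ∘ τ) • f b
  rw [AlternatingMap.map_perm, AlternatingMap.map_perm, b.det_self, Units.smul_def,
    Units.smul_def, smul_one_smul]

theorem Fin.append_comp_finSumFinEquiv {α : Type*} {m n : ℕ} (f : Fin m → α) (g : Fin n → α) :
    Fin.append f g ∘ finSumFinEquiv = Sum.elim f g := by
  ext (i | i) <;> simp

theorem Fin.range_append {α : Type*} {m n : ℕ} (f : Fin m → α) (g : Fin n → α) :
    range (Fin.append f g) = range f ∪ range g := by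
  rw [← Sum.elim_range, ← Fin.append_comp_finSumFinEquiv, EquivLike.range_comp]

theorem linearIndependent_finAppend_iff {R M : Type*} [Ring R] [AddCommGroup M] [Module R M]
    {m n : ℕ} {f : Fin m → M} {g : Fin n → M} :
    LinearIndependent R (Fin.append f g) ↔ LinearIndependent R f ∧ LinearIndependent R g ∧
      Disjoint (span R (range f)) (span R (range g)) := by
  rw [← linearIndependent_equiv' finSumFinEquiv (Fin.append_comp_finSumFinEquiv f g),
    linearIndependent_sum, Sum.elim_comp_inl, Sum.elim_comp_inr]

theorem span_range_gramSchmidtNormed {𝕜 E ι : Type*} [RCLike 𝕜] [NormedAddCommGroup E]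
    [InnerProductSpace 𝕜 E] [LinearOrder ι] [LocallyFiniteOrderBot ι] [WellFoundedLT ι]
    (f : ι → E) : span 𝕜 (range (gramSchmidtNormed 𝕜 f)) = span 𝕜 (range f) := by
  rw [span_gramSchmidtNormed_range, span_gramSchmidt]

section Leibniz

variable {X : Type*} [NormedAddCommGroup X] [InnerProductSpace ℝ X]
  {ginv : ExteriorAlgebra ℝ X →ₐ[ℝ] ExteriorAlgebra ℝ X}

theorem lc_ι_mul_of_leibniz (hginv : ∀ v, ginv (ι ℝ v) = -ι ℝ v)
    {lc : X → ExteriorAlgebra ℝ X →ₗ[ℝ] ExteriorAlgebra ℝ X}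
    (hlc_vec : ∀ v w : X, lc v (ι ℝ w) = algebraMap ℝ (ExteriorAlgebra ℝ X) ⟪v, w⟫)
    (hlc_mul : ∀ (v : X) (M N : ExteriorAlgebra ℝ X),
      lc v (M * N) = lc v M * N + ginv M * lc v N) (v u : X) (M : ExteriorAlgebra ℝ X) :
    lc v (ι ℝ u * M) = ⟪v, u⟫ • M - ι ℝ u * lc v M := by
  rw [hlc_mul, hlc_vec, hginv, Algebra.smul_def, neg_mul, sub_eq_add_neg]

theorem rc_mul_ι_of_leibniz (hginv : ∀ v, ginv (ι ℝ v) = -ι ℝ v)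
    {rc : X → ExteriorAlgebra ℝ X →ₗ[ℝ] ExteriorAlgebra ℝ X}
    (hrc_vec : ∀ v w : X, rc v (ι ℝ w) = algebraMap ℝ (ExteriorAlgebra ℝ X) ⟪v, w⟫)
    (hrc_mul : ∀ (v : X) (M N : ExteriorAlgebra ℝ X),
      rc v (M * N) = M * rc v N + rc v M * ginv N) (v u : X) (M : ExteriorAlgebra ℝ X) :
    rc v (M * ι ℝ u) = ⟪v, u⟫ • M - rc v M * ι ℝ u := by
  rw [hrc_mul, hrc_vec, hginv, ← Algebra.commutes, Algebra.smul_def, mul_neg, sub_eq_add_neg]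

end Leibniz

section Blades

variable {X : Type*} [NormedAddCommGroup X] [InnerProductSpace ℝ X]

noncomputable def listBlade (l : List X) : ExteriorAlgebra ℝ X := (l.map (ι ℝ)).prod

@[simp] theorem listBlade_nil : listBlade ([] : List X) = 1 := rfl

@[simp] theorem listBlade_cons (x : X) (l : List X) :
    listBlade (x :: l) = ι ℝ x * listBlade l := by
  simp [listBlade]

@[simp] theorem listBlade_append (l₁ l₂ : List X) :
    listBlade (l₁ ++ l₂) = listBlade l₁ * listBlade l₂ := by
  simp [listBlade]

theorem expBlade_eq_listBlade {k : ℕ} (u : Fin k → X) : expBlade u = listBlade (List.ofFn u) := by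
  simp [expBlade, listBlade, List.map_ofFn, Function.comp_def]

theorem expBlade_eq_ιMulti {k : ℕ} (u : Fin k → X) : expBlade u = ιMulti ℝ k u := by
  rw [ιMulti_apply]; rfl

theorem expBlade_finCons {k : ℕ} (x : X) (u : Fin k → X) :
    expBlade (Fin.cons x u : Fin (k + 1) → X) = ι ℝ x * expBlade u := by
  simp [expBlade, List.ofFn_succ]

theorem expBlade_finAppend {k m : ℕ} (u : Fin k → X) (w : Fin m → X) :
    expBlade (Fin.append u w) = expBlade u * expBlade w := by
  simp only [expBlade_eq_ιMulti, ιMulti_mul_ιMulti]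

theorem expBlade_eq_smul_of_mem_span {k : ℕ} {f : Fin k → X} (hf : LinearIndependent ℝ f)
    (u : Fin k → X) (hu : ∀ i, u i ∈ span ℝ (range f)) : ∃ c : ℝ, expBlade u = c • expBlade f := by
  let b := Module.Basis.span hf
  refine ⟨b.det fun i => ⟨u i, hu i⟩, ?_⟩
  have := ((ιMulti ℝ k).compLinearMap (span ℝ (range f)).subtype).apply_eq_basis_det_smul b
    fun i => ⟨u i, hu i⟩
  simpa [expBlade_eq_ιMulti, b, Module.Basis.span_apply] using this

theorem IsBlade.smul {B : ExteriorAlgebra ℝ X} (hB : IsBlade B) (c : ℝ) : IsBlade (c • B) := by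
  rcases hB with ⟨r, rfl⟩ | ⟨_ | k, u, rfl⟩
  · exact .inl ⟨c * r, by rw [Algebra.smul_def, map_mul]⟩
  · exact .inl ⟨c, by simp [Algebra.algebraMap_eq_smul_one]⟩
  · refine .inr ⟨k + 1, Fin.cons (c • u 0) (Fin.tail u), ?_⟩
    simp [List.ofFn_succ, Fin.tail]

theorem isBlade_expBlade {k : ℕ} (u : Fin k → X) : IsBlade (expBlade u) := .inr ⟨k, u, rfl⟩

variable [FiniteDimensional ℝ X]

theorem expBlade_ne_zero_iff {k : ℕ} {u : Fin k → X} : expBlade u ≠ 0 ↔ LinearIndependent ℝ u := by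
  rw [← Matrix.det_gram_ne_zero_iff_linearIndependent (𝕜 := ℝ), ← exteriorPower.inner_ιMulti_self,
    Ne, Ne, inner_self_eq_zero, expBlade_eq_ιMulti, ← exteriorPower.ιMulti_apply_coe,
    ZeroMemClass.coe_eq_zero]

theorem exists_expBlade_eq_smul_gramSchmidtNormed {k : ℕ} {u : Fin k → X}
    (hu : LinearIndependent ℝ u) :
    ∃ c : ℝ, c ≠ 0 ∧ expBlade u = c • expBlade (gramSchmidtNormed ℝ u) := by
  obtain ⟨c, hc⟩ :=
    expBlade_eq_smul_of_mem_span (gramSchmidtNormed_orthonormal hu).linearIndependent u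
      fun i => (span_range_gramSchmidtNormed u).ge (subset_span (mem_range_self i))
  exact ⟨c, fun h => expBlade_ne_zero_iff.2 hu (by rw [hc, h, zero_smul]), hc⟩

theorem setOf_ι_mul_expBlade_eq_zero {k : ℕ} {u : Fin k → X} (hu : LinearIndependent ℝ u) :
    {x : X | ι ℝ x * expBlade u = 0} = span ℝ (range u) := by
  ext x
  rw [mem_ofPred_eq, ← expBlade_finCons, ← not_ne_iff, expBlade_ne_zero_iff,
    linearIndependent_finCons, not_and_not_right]
  exact ⟨fun h => h hu, fun h _ => h⟩

end Blades

section OrthonormalFrames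

variable {X : Type*} [NormedAddCommGroup X] [InnerProductSpace ℝ X]

noncomputable def orthonormalFrame (W : Submodule ℝ X) [FiniteDimensional ℝ W] :
    Fin (Module.finrank ℝ W) → X :=
  fun i => stdOrthonormalBasis ℝ W i

theorem orthonormal_orthonormalFrame (W : Submodule ℝ X) [FiniteDimensional ℝ W] :
    Orthonormal ℝ (orthonormalFrame W) :=
  (stdOrthonormalBasis ℝ W).orthonormal.comp_linearIsometry W.subtypeₗᵢ

theorem span_orthonormalFrame (W : Submodule ℝ X) [FiniteDimensional ℝ W] :
    span ℝ (range (orthonormalFrame W)) = W := by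
  have : range (orthonormalFrame W) = W.subtype '' range (stdOrthonormalBasis ℝ W) :=
    range_comp W.subtype _
  rw [this, span_image, ← OrthonormalBasis.coe_toBasis, Module.Basis.span_eq, Submodule.map_top,
    range_subtype]

def OrthonormalList (l : List X) : Prop :=
  l.Pairwise (fun a b => ⟪a, b⟫ = 0) ∧ ∀ a ∈ l, ‖a‖ = 1

theorem OrthonormalList.sublist {l₁ l₂ : List X} (h : OrthonormalList l₂) (hs : l₁.Sublist l₂) :
    OrthonormalList l₁ :=
  ⟨h.1.sublist hs, fun a ha => h.2 a (hs.subset ha)⟩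

theorem OrthonormalList.perm {l₁ l₂ : List X} (h : OrthonormalList l₁) (hp : l₁.Perm l₂) :
    OrthonormalList l₂ :=
  ⟨h.1.perm hp fun hab => by rwa [real_inner_comm], fun a ha => h.2 a (hp.mem_iff.2 ha)⟩

theorem Orthonormal.orthonormalList_ofFn {k : ℕ} {f : Fin k → X} (hf : Orthonormal ℝ f) :
    OrthonormalList (List.ofFn f) := by
  refine ⟨List.pairwise_ofFn.2 fun i j hij => hf.2 hij.ne, fun a ha => ?_⟩
  obtain ⟨i, rfl⟩ := List.mem_ofFn.1 ha
  exact hf.1 i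

theorem OrthonormalList.append {l₁ l₂ : List X} (h₁ : OrthonormalList l₁)
    (h₂ : OrthonormalList l₂) (h : ∀ a ∈ l₁, ∀ b ∈ l₂, ⟪a, b⟫ = 0) :
    OrthonormalList (l₁ ++ l₂) := by
  refine ⟨List.pairwise_append.2 ⟨h₁.1, h₂.1, h⟩, fun a ha => ?_⟩
  rcases List.mem_append.1 ha with ha | ha
  exacts [h₁.2 a ha, h₂.2 a ha]

theorem OrthonormalList.orthonormal_get {l : List X} (h : OrthonormalList l) :
    Orthonormal ℝ l.get := by
  refine ⟨fun i => h.2 _ (List.get_mem _ _), fun i j hij => ?_⟩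
  rcases lt_or_gt_of_ne hij with hij | hij
  · exact List.pairwise_iff_getElem.1 h.1 _ _ _ _ hij
  · rw [real_inner_comm]; exact List.pairwise_iff_getElem.1 h.1 _ _ _ _ hij

variable [FiniteDimensional ℝ X]

theorem orthonormalList_gramSchmidtNormed_append {k : ℕ} {u : Fin k → X}
    (hu : LinearIndependent ℝ u) :
    OrthonormalList (List.ofFn (gramSchmidtNormed ℝ u) ++
      List.ofFn (orthonormalFrame (span ℝ (range u))ᗮ)) := by
  refine (gramSchmidtNormed_orthonormal hu).orthonormalList_ofFn.append
    (orthonormal_orthonormalFrame _).orthonormalList_ofFn fun a ha b hb => ?_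
  obtain ⟨i, rfl⟩ := List.mem_ofFn.1 ha
  obtain ⟨j, rfl⟩ := List.mem_ofFn.1 hb
  refine (isOrtho_orthogonal_right (span ℝ (range u))).inner_eq ?_ ?_
  · exact (span_range_gramSchmidtNormed u).le (subset_span (mem_range_self i))
  · exact (span_orthonormalFrame _).le (subset_span (mem_range_self j))

theorem length_gramSchmidtNormed_append {k : ℕ} {u : Fin k → X} (hu : LinearIndependent ℝ u) :
    (List.ofFn (gramSchmidtNormed ℝ u) ++
      List.ofFn (orthonormalFrame (span ℝ (range u))ᗮ)).length = Module.finrank ℝ X := by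
  rw [List.length_append, List.length_ofFn, List.length_ofFn,
    ← finrank_add_finrank_orthogonal (span ℝ (range u)), finrank_span_eq_card hu,
    Fintype.card_fin]

theorem exists_expBlade_eq_smul_listBlade {n : ℕ} (e : OrthonormalBasis (Fin n) ℝ X)
    {l : List X} (hl : OrthonormalList l) (hlen : l.length = Module.finrank ℝ X) :
    ∃ c : ℝ, c ≠ 0 ∧ expBlade (fun i => e i) = c • listBlade l := by
  obtain rfl : n = l.length := by
    rw [hlen, Module.finrank_eq_card_basis e.toBasis, Fintype.card_fin]
  obtain ⟨d, hd⟩ := expBlade_eq_smul_of_mem_span e.toBasis.linearIndependent l.get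
    fun i => by rw [e.toBasis.span_eq]; exact mem_top
  rw [expBlade_eq_listBlade, List.ofFn_get, OrthonormalBasis.coe_toBasis] at hd
  have hd0 : d ≠ 0 := by
    rintro rfl
    rw [zero_smul, ← List.ofFn_get l, ← expBlade_eq_listBlade] at hd
    exact expBlade_ne_zero_iff.2 hl.orthonormal_get.linearIndependent hd
  exact ⟨d⁻¹, inv_ne_zero hd0, by rw [hd, smul_smul, inv_mul_cancel₀ hd0, one_smul]⟩

theorem linearIndependent_append_orthonormalFrame_iff (V W : Submodule ℝ X) :
    LinearIndependent ℝ (Fin.append (orthonormalFrame Vᗮ) (orthonormalFrame Wᗮ)) ↔ V ⊔ W = ⊤ := by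
  rw [linearIndependent_finAppend_iff, span_orthonormalFrame, span_orthonormalFrame,
    disjoint_iff, inf_orthogonal, orthogonal_eq_bot_iff]
  simp [(orthonormal_orthonormalFrame _).linearIndependent]

theorem orthogonal_span_append_orthonormalFrame (V W : Submodule ℝ X) :
    (span ℝ (range (Fin.append (orthonormalFrame Vᗮ) (orthonormalFrame Wᗮ))))ᗮ = V ⊓ W := by
  rw [Fin.range_append, span_union, span_orthonormalFrame, span_orthonormalFrame,
    ← inf_orthogonal, orthogonal_orthogonal, orthogonal_orthogonal]

end OrthonormalFrames

/-- `lc v N = v⌟N`, `rc v N = N⌞v`, `LC M N = M⌟N` and `RC N M = N⌞M`, with the Leibniz rules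
specialised to a vector factor. -/
structure Contractions (X : Type*) [NormedAddCommGroup X] [InnerProductSpace ℝ X] where
  lc : X → ExteriorAlgebra ℝ X →ₗ[ℝ] ExteriorAlgebra ℝ X
  lc_one : ∀ v, lc v 1 = 0
  lc_ι_mul : ∀ v u M, lc v (ι ℝ u * M) = ⟪v, u⟫ • M - ι ℝ u * lc v M
  rc : X → ExteriorAlgebra ℝ X →ₗ[ℝ] ExteriorAlgebra ℝ X
  rc_one : ∀ v, rc v 1 = 0
  rc_mul_ι : ∀ v u M, rc v (M * ι ℝ u) = ⟪v, u⟫ • M - rc v M * ι ℝ u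
  LC : ExteriorAlgebra ℝ X →ₗ[ℝ] ExteriorAlgebra ℝ X →ₗ[ℝ] ExteriorAlgebra ℝ X
  LC_one : ∀ N, LC 1 N = N
  LC_ι_mul : ∀ v M N, LC (ι ℝ v * M) N = LC M (lc v N)
  RC : ExteriorAlgebra ℝ X →ₗ[ℝ] ExteriorAlgebra ℝ X →ₗ[ℝ] ExteriorAlgebra ℝ X
  RC_one : ∀ N, RC N 1 = N
  RC_ι_mul : ∀ v M N, RC N (ι ℝ v * M) = rc v (RC N M)

namespace Contractions

variable {X : Type*} [NormedAddCommGroup X] [InnerProductSpace ℝ X] (C : Contractions X)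

theorem lc_listBlade_eq_zero {v : X} {l : List X} (h : ∀ a ∈ l, ⟪v, a⟫ = 0) :
    C.lc v (listBlade l) = 0 := by
  induction l with
  | nil => exact C.lc_one v
  | cons a l ih =>
    rw [listBlade_cons, C.lc_ι_mul, h a List.mem_cons_self,
      ih fun b hb => h b (List.mem_cons_of_mem a hb), zero_smul, mul_zero, sub_zero]

theorem rc_listBlade_eq_zero {v : X} {l : List X} (h : ∀ a ∈ l, ⟪v, a⟫ = 0) :
    C.rc v (listBlade l) = 0 := by
  induction l using List.reverseRecOn with
  | nil => exact C.rc_one v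
  | append_singleton l a ih =>
    rw [listBlade_append, listBlade_cons, listBlade_nil, mul_one, C.rc_mul_ι,
      h a (by simp), ih fun b hb => h b (by simp [hb]), zero_smul, zero_mul, sub_zero]

theorem lc_listBlade_cons_self {x : X} {l : List X} (h : OrthonormalList (x :: l)) :
    C.lc x (listBlade (x :: l)) = listBlade l := by
  have hx : ⟪x, x⟫ = 1 := by rw [real_inner_self_eq_norm_sq, h.2 x List.mem_cons_self, one_pow]
  rw [listBlade_cons, C.lc_ι_mul, C.lc_listBlade_eq_zero (List.pairwise_cons.1 h.1).1, hx,
    one_smul, mul_zero, sub_zero]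

theorem rc_listBlade_concat_self {x : X} {l : List X} (h : OrthonormalList (l ++ [x])) :
    C.rc x (listBlade (l ++ [x])) = listBlade l := by
  have hx : ⟪x, x⟫ = 1 := by rw [real_inner_self_eq_norm_sq, h.2 x (by simp), one_pow]
  have hl : ∀ a ∈ l, ⟪x, a⟫ = 0 := fun a ha => by
    rw [real_inner_comm]; exact (List.pairwise_append.1 h.1).2.2 a ha x (by simp)
  rw [listBlade_append, listBlade_cons, listBlade_nil, mul_one, C.rc_mul_ι,
    C.rc_listBlade_eq_zero hl, hx, one_smul, zero_mul, sub_zero]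

theorem LC_listBlade_append {a b : List X} (h : OrthonormalList (a ++ b)) :
    C.LC (listBlade a) (listBlade (a ++ b)) = listBlade b := by
  induction a with
  | nil => exact C.LC_one _
  | cons x a ih =>
    rw [listBlade_cons, C.LC_ι_mul, List.cons_append, C.lc_listBlade_cons_self (l := a ++ b) h,
      ih (h.sublist (List.sublist_cons_self x _))]

theorem RC_listBlade_append {a b : List X} (h : OrthonormalList (b ++ a)) :
    C.RC (listBlade (b ++ a)) (listBlade a) = listBlade b := by
  induction a generalizing b with
  | nil => simpa using C.RC_one (listBlade b)
  | cons x a ih =>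
    have h' : OrthonormalList ((b ++ [x]) ++ a) := by simpa using h
    rw [listBlade_cons, C.RC_ι_mul, show b ++ x :: a = (b ++ [x]) ++ a by simp, ih h',
      C.rc_listBlade_concat_self (h'.sublist (List.sublist_append_left _ a))]

variable [FiniteDimensional ℝ X] {n : ℕ} (e : OrthonormalBasis (Fin n) ℝ X)

theorem LC_expBlade_eq_smul {k : ℕ} {u : Fin k → X} (hu : LinearIndependent ℝ u) :
    ∃ c : ℝ, c ≠ 0 ∧ C.LC (expBlade u) (expBlade fun i => e i) =
      c • expBlade (orthonormalFrame (span ℝ (range u))ᗮ) := by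
  obtain ⟨c, hc, hcu⟩ := exists_expBlade_eq_smul_gramSchmidtNormed hu
  have hl := orthonormalList_gramSchmidtNormed_append hu
  obtain ⟨d, hd, hΩ⟩ := exists_expBlade_eq_smul_listBlade e hl
    (length_gramSchmidtNormed_append hu)
  refine ⟨d * c, mul_ne_zero hd hc, ?_⟩
  rw [hcu, hΩ, map_smul, map_smul, LinearMap.smul_apply, expBlade_eq_listBlade,
    C.LC_listBlade_append hl, expBlade_eq_listBlade, smul_smul]

theorem RC_expBlade_eq_smul {k : ℕ} {u : Fin k → X} (hu : LinearIndependent ℝ u) :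
    ∃ c : ℝ, c ≠ 0 ∧ C.RC (expBlade fun i => e i) (expBlade u) =
      c • expBlade (orthonormalFrame (span ℝ (range u))ᗮ) := by
  obtain ⟨c, hc, hcu⟩ := exists_expBlade_eq_smul_gramSchmidtNormed hu
  have hl := (orthonormalList_gramSchmidtNormed_append hu).perm List.perm_append_comm
  obtain ⟨d, hd, hΩ⟩ := exists_expBlade_eq_smul_listBlade e hl
    (by rw [List.length_append, add_comm, ← List.length_append,
      length_gramSchmidtNormed_append hu])
  refine ⟨c * d, mul_ne_zero hc hd, ?_⟩
  rw [hcu, hΩ, map_smul, map_smul, LinearMap.smul_apply, expBlade_eq_listBlade,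
    C.RC_listBlade_append hl, expBlade_eq_listBlade, smul_smul]

end Contractions

theorem stmt10_general {X : Type*} [NormedAddCommGroup X] [InnerProductSpace ℝ X] [FiniteDimensional ℝ X]
    {n : ℕ} (e : OrthonormalBasis (Fin n) ℝ X)
    -- the grade involution: the unique algebra automorphism with `v̂ = -v` on vectors
    (ginv : ExteriorAlgebra ℝ X →ₐ[ℝ] ExteriorAlgebra ℝ X)
    (hginv : ∀ v : X, ginv (ExteriorAlgebra.ι ℝ v) = - ExteriorAlgebra.ι ℝ v)
    -- the left contraction by a vector, characterized by its defining properties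
    (lc : X → ExteriorAlgebra ℝ X →ₗ[ℝ] ExteriorAlgebra ℝ X)
    (hlc_one : ∀ v : X, lc v 1 = 0)
    (hlc_vec : ∀ v w : X, lc v (ExteriorAlgebra.ι ℝ w) = algebraMap ℝ (ExteriorAlgebra ℝ X) ⟪v, w⟫)
    (hlc_mul : ∀ (v : X) (M N : ExteriorAlgebra ℝ X),
      lc v (M * N) = lc v M * N + ginv M * lc v N)
    -- the right contraction by a vector `N ↦ N⌞v`, characterized by its defining properties
    (rc : X → ExteriorAlgebra ℝ X →ₗ[ℝ] ExteriorAlgebra ℝ X)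
    (hrc_one : ∀ v : X, rc v 1 = 0)
    (hrc_vec : ∀ v w : X, rc v (ExteriorAlgebra.ι ℝ w) = algebraMap ℝ (ExteriorAlgebra ℝ X) ⟪v, w⟫)
    (hrc_mul : ∀ (v : X) (M N : ExteriorAlgebra ℝ X),
      rc v (M * N) = M * rc v N + rc v M * ginv N)
    -- the left contraction `LC M N = M ⌟ N`, extended (bi)linearly in the contractor `M`
    (LC : ExteriorAlgebra ℝ X →ₗ[ℝ] ExteriorAlgebra ℝ X →ₗ[ℝ] ExteriorAlgebra ℝ X)
    (hLC_one : ∀ N : ExteriorAlgebra ℝ X, LC 1 N = N)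
    (hLC_mul : ∀ (v : X) (M N : ExteriorAlgebra ℝ X),
      LC (ExteriorAlgebra.ι ℝ v * M) N = LC M (lc v N))
    -- the right contraction `RC N M = N ⌞ M` (contractee `N`, contractor `M`),
    -- extended (bi)linearly in the contractor `M`
    (RC : ExteriorAlgebra ℝ X →ₗ[ℝ] ExteriorAlgebra ℝ X →ₗ[ℝ] ExteriorAlgebra ℝ X)
    (hRC_one : ∀ N : ExteriorAlgebra ℝ X, RC N 1 = N)
    (hRC_mul : ∀ (v : X) (M N : ExteriorAlgebra ℝ X),
      RC N (ExteriorAlgebra.ι ℝ v * M) = rc v (RC N M))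
    {p q : ℕ} (v : Fin p → X) (w : Fin q → X)
    (hA : expBlade v ≠ 0) (hB : expBlade w ≠ 0)
    -- `reg = A ∨ B`, with Ω = e₁ ∧ ⋯ ∧ e_n, ⋆_R M = LC M Ω, ⋆_L M = RC Ω M
    (reg : ExteriorAlgebra ℝ X)
    (hreg : reg = RC (expBlade fun i => e i)
      (LC (expBlade v) (expBlade fun i => e i) *
        LC (expBlade w) (expBlade fun i => e i))) :
    (reg ≠ 0 ↔ Submodule.span ℝ (Set.range v) ⊔ Submodule.span ℝ (Set.range w) = ⊤) ∧
    (reg ≠ 0 → IsBlade reg ∧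
      {x : X | ExteriorAlgebra.ι ℝ x * reg = 0} =
        ((Submodule.span ℝ (Set.range v) ⊓ Submodule.span ℝ (Set.range w) :
          Submodule ℝ X) : Set X)) := by
  let C : Contractions X := ⟨lc, hlc_one, lc_ι_mul_of_leibniz hginv hlc_vec hlc_mul,
    rc, hrc_one, rc_mul_ι_of_leibniz hginv hrc_vec hrc_mul, LC, hLC_one, hLC_mul, RC, hRC_one,
    hRC_mul⟩
  set V := span ℝ (range v)
  set W := span ℝ (range w)
  obtain ⟨c₁, hc₁, hA'⟩ := C.LC_expBlade_eq_smul e (expBlade_ne_zero_iff.1 hA)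
  obtain ⟨c₂, hc₂, hB'⟩ := C.LC_expBlade_eq_smul e (expBlade_ne_zero_iff.1 hB)
  set z := Fin.append (orthonormalFrame Vᗮ) (orthonormalFrame Wᗮ)
  have hreg' : reg = (c₁ * c₂) • C.RC (expBlade fun i => e i) (expBlade z) := by
    rw [hreg, expBlade_finAppend]
    change C.RC _ (C.LC _ _ * C.LC _ _) = _
    rw [hA', hB', smul_mul_smul_comm, map_smul]
  have hz := linearIndependent_append_orthonormalFrame_iff V W
  by_cases htop : V ⊔ W = ⊤
  · obtain ⟨c₃, hc₃, hz'⟩ := C.RC_expBlade_eq_smul e (hz.2 htop)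
    rw [orthogonal_span_append_orthonormalFrame] at hz'
    have hc : c₁ * c₂ * c₃ ≠ 0 := mul_ne_zero (mul_ne_zero hc₁ hc₂) hc₃
    have hg := (orthonormal_orthonormalFrame (V ⊓ W)).linearIndependent
    have hreg'' : reg = (c₁ * c₂ * c₃) • expBlade (orthonormalFrame (V ⊓ W)) := by
      rw [hreg', hz', smul_smul]
    refine ⟨iff_of_true (hreg'' ▸ smul_ne_zero hc (expBlade_ne_zero_iff.2 hg)) htop,
      fun _ => ⟨hreg'' ▸ (isBlade_expBlade _).smul _, ?_⟩⟩
    simp_rw [hreg'', mul_smul_comm, smul_eq_zero, hc, false_or]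
    rw [setOf_ι_mul_expBlade_eq_zero hg, span_orthonormalFrame]
  · have hz0 : expBlade z = 0 := not_ne_iff.1 (mt expBlade_ne_zero_iff.1 (mt hz.1 htop))
    simp [hreg', hz0, htop]

/-- the regressive product `M∨N = ⋆_L(⋆_R M ∧ ⋆_R N)` of nonzero blades is
nonzero iff their spaces sum to `X`, in which case it is a blade whose space is the
intersection of their spaces. -/
theorem stmt10 {X : Type*} [NormedAddCommGroup X] [InnerProductSpace ℝ X] [FiniteDimensional ℝ X]
    {n : ℕ} (e : OrthonormalBasis (Fin n) ℝ X)
    -- the grade involution: the unique algebra automorphism with `v̂ = -v` on vectors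
    (ginv : ExteriorAlgebra ℝ X →ₐ[ℝ] ExteriorAlgebra ℝ X)
    (hginv : ∀ v : X, ginv (ExteriorAlgebra.ι ℝ v) = - ExteriorAlgebra.ι ℝ v)
    -- the left contraction by a vector, characterized by its defining properties
    (lc : X → ExteriorAlgebra ℝ X →ₗ[ℝ] ExteriorAlgebra ℝ X)
    (hlc_one : ∀ v : X, lc v 1 = 0)
    (hlc_vec : ∀ v w : X, lc v (ExteriorAlgebra.ι ℝ w) = algebraMap ℝ (ExteriorAlgebra ℝ X) ⟪v, w⟫)
    (hlc_mul : ∀ (v : X) (M N : ExteriorAlgebra ℝ X),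
      lc v (M * N) = lc v M * N + ginv M * lc v N)
    -- the right contraction by a vector `N ↦ N⌞v`, characterized by its defining properties
    (rc : X → ExteriorAlgebra ℝ X →ₗ[ℝ] ExteriorAlgebra ℝ X)
    (hrc_one : ∀ v : X, rc v 1 = 0)
    (hrc_vec : ∀ v w : X, rc v (ExteriorAlgebra.ι ℝ w) = algebraMap ℝ (ExteriorAlgebra ℝ X) ⟪v, w⟫)
    (hrc_mul : ∀ (v : X) (M N : ExteriorAlgebra ℝ X),
      rc v (M * N) = M * rc v N + rc v M * ginv N)
    -- the left contraction `LC M N = M ⌟ N`, extended (bi)linearly in the contractor `M`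
    (LC : ExteriorAlgebra ℝ X →ₗ[ℝ] ExteriorAlgebra ℝ X →ₗ[ℝ] ExteriorAlgebra ℝ X)
    (hLC_one : ∀ N : ExteriorAlgebra ℝ X, LC 1 N = N)
    (hLC_vec : ∀ (v : X) (N : ExteriorAlgebra ℝ X), LC (ExteriorAlgebra.ι ℝ v) N = lc v N)
    (hLC_mul : ∀ (v : X) (M N : ExteriorAlgebra ℝ X),
      LC (ExteriorAlgebra.ι ℝ v * M) N = LC M (lc v N))
    -- the right contraction `RC N M = N ⌞ M` (contractee `N`, contractor `M`),
    -- extended (bi)linearly in the contractor `M`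
    (RC : ExteriorAlgebra ℝ X →ₗ[ℝ] ExteriorAlgebra ℝ X →ₗ[ℝ] ExteriorAlgebra ℝ X)
    (hRC_one : ∀ N : ExteriorAlgebra ℝ X, RC N 1 = N)
    (hRC_vec : ∀ (v : X) (N : ExteriorAlgebra ℝ X), RC N (ExteriorAlgebra.ι ℝ v) = rc v N)
    (hRC_mul : ∀ (v : X) (M N : ExteriorAlgebra ℝ X),
      RC N (ExteriorAlgebra.ι ℝ v * M) = rc v (RC N M))
    {p q : ℕ} (v : Fin p → X) (w : Fin q → X)
    (hA : expBlade v ≠ 0) (hB : expBlade w ≠ 0)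
    -- `reg = A ∨ B`, with Ω = e₁ ∧ ⋯ ∧ e_n, ⋆_R M = LC M Ω, ⋆_L M = RC Ω M
    (reg : ExteriorAlgebra ℝ X)
    (hreg : reg = RC (expBlade fun i => e i)
      (LC (expBlade v) (expBlade fun i => e i) *
        LC (expBlade w) (expBlade fun i => e i))) :
    (reg ≠ 0 ↔ Submodule.span ℝ (Set.range v) ⊔ Submodule.span ℝ (Set.range w) = ⊤) ∧
    (reg ≠ 0 → IsBlade reg ∧
      {x : X | ExteriorAlgebra.ι ℝ x * reg = 0} =
        ((Submodule.span ℝ (Set.range v) ⊓ Submodule.span ℝ (Set.range w) :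
          Submodule ℝ X) : Set X)) :=
  stmt10_general e ginv hginv lc hlc_one hlc_vec hlc_mul rc hrc_one hrc_vec hrc_mul LC hLC_one
    hLC_mul RC hRC_one hRC_mul v w hA hB reg hreg
end

section
/- Let M ∈ ⋀X and suppose M = B₁ + ⋯ + B_m where each B_i is a blade, and this decomposition is minimal, i.e. M cannot be written as a sum of fewer than m blades. Then the decomposition is balanced: isp M = ⋂_{i=1}^m isp B_i and osp M = osp B₁ + ⋯ + osp B_m. -/
open scoped RealInnerProductSpace

/-- The inner space of a multivector `M`: the subspace `{v ∈ X : v ∧ M = 0}`. -/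
noncomputable def innerSpace {X : Type*} [AddCommGroup X] [Module ℝ X]
    (M : ExteriorAlgebra ℝ X) : Submodule ℝ X :=
  LinearMap.ker ((LinearMap.mulRight ℝ M).comp (ExteriorAlgebra.ι ℝ))

/-- The outer space of a multivector `M`: the intersection of all subspaces `V ⊆ X` such
that `M` lies in the subalgebra of the exterior algebra generated by `V`. -/
noncomputable def outerSpace {X : Type*} [AddCommGroup X] [Module ℝ X]
    (M : ExteriorAlgebra ℝ X) : Submodule ℝ X :=
  sInf {V : Submodule ℝ X |
    M ∈ Algebra.adjoin ℝ (⇑(ExteriorAlgebra.ι ℝ (M := X)) '' (V : Set X))}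

/-!
If a linear map `T` of `⋀X` sends blades to blades and fixes `M`, then `M = ∑ T Bᵢ` is again a
decomposition into `m` blades, so by minimality no `T Bᵢ` vanishes. In both cases, a failure of
balance at `Bᵢ` yields such a `T`, built from a linear map of `X`, with `T Bᵢ = 0`.

Outer space: if `M ∈ ⋀V` but some vector `x` of `Bᵢ` lies outside `V`, take a projection `g` of
`X` fixing `V` and killing `x`; then `T = ⋀g` fixes `M` and kills `Bᵢ`.

Inner space: if `x ∧ M = 0` but `x ∧ Bᵢ ≠ 0`, then `x` is not in the span of the vectors of `Bᵢ`,
so some `φ` with `φ x = 1` vanishes on them. Let `q y = y - φ(y) x` (Mathlib's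
`transvection φ (-x)`). As `M = x ∧ N`, `⋀q` kills `M` and fixes `Bᵢ`, so `T = id - ⋀q` fixes `M`
and kills `Bᵢ`. It preserves blades: a blade can be written `a ∧ w₁ ∧ ⋯ ∧ wₖ` with all
`wⱼ ∈ ker φ`, and `T` sends it to `φ(a) x ∧ w₁ ∧ ⋯ ∧ wₖ`.
-/

open ExteriorAlgebra LinearMap

section Field

variable {K X : Type*} [Field K] [AddCommGroup X] [Module K X]

theorem Submodule.exists_dual_eq_one_and_le_ker {p : Submodule K X} {x : X} (hx : x ∉ p) :
    ∃ φ : Module.Dual K X, φ x = 1 ∧ p ≤ ker φ := by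
  obtain ⟨f, hfx, hf⟩ := p.exists_dual_map_eq_bot_of_notMem hx inferInstance
  refine ⟨(f x)⁻¹ • f, inv_mul_cancel₀ hfx, fun y hy => ?_⟩
  have hfy : f y = 0 := (Submodule.eq_bot_iff _).mp hf _ (Submodule.mem_map_of_mem hy)
  simp [hfy]

theorem LinearMap.transvection_neg_apply_self {φ : Module.Dual K X} {x : X} (hx : φ x = 1) :
    transvection φ (-x) x = 0 := by
  simp [transvection.apply, hx]

theorem LinearMap.transvection_apply_of_apply_eq_zero {φ : Module.Dual K X} (x : X) {y : X}
    (hy : φ y = 0) : transvection φ x y = y := by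
  simp [transvection.apply, hy]

theorem Submodule.exists_eqOn_and_apply_eq_zero {p : Submodule K X} {x : X} (hx : x ∉ p) :
    ∃ g : X →ₗ[K] X, (∀ y ∈ p, g y = y) ∧ g x = 0 := by
  obtain ⟨φ, hφx, hp⟩ := p.exists_dual_eq_one_and_le_ker hx
  exact ⟨transvection φ (-x), fun y hy => transvection_apply_of_apply_eq_zero _ (hp hy),
    transvection_neg_apply_self hφx⟩

namespace ExteriorAlgebra

theorem ιMulti_cons {n : ℕ} (a : X) (v : Fin n → X) :
    ιMulti K (n + 1) (Matrix.vecCons a v) = ι K a * ιMulti K n v := by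
  simp [ιMulti_succ_apply]

theorem ι_mul_ι_comm (a b : X) : ι K a * ι K b = ι K (-b) * ι K a := by
  rw [map_neg, neg_mul, eq_neg_iff_add_eq_zero, ι_add_mul_swap]

theorem ι_mul_ιMulti_eq_zero {n : ℕ} {v : Fin n → X} {x : X}
    (hx : x ∈ Submodule.span K (Set.range v)) : ι K x * ιMulti K n v = 0 := by
  rw [← ιMulti_cons]
  refine (ιMulti K (n + 1)).map_linearDependent _ fun h => ?_
  exact (linearIndependent_finCons.mp h).2 hx

theorem map_ιMulti_eq_zero {n : ℕ} (g : X →ₗ[K] X) {v : Fin n → X} {i : Fin n} (hi : g (v i) = 0) :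
    map g (ιMulti K n v) = 0 := by
  rw [map_apply_ιMulti]
  exact (ιMulti K n).map_coord_zero i hi

theorem ιMulti_mem_adjoin {n : ℕ} {p : Submodule K X} {v : Fin n → X} (hv : ∀ i, v i ∈ p) :
    ιMulti K n v ∈ Algebra.adjoin K (ι K '' (p : Set X)) := by
  rw [ιMulti_apply]
  refine Subalgebra.list_prod_mem _ fun a ha => ?_
  obtain ⟨i, rfl⟩ := List.mem_ofFn.mp ha
  exact Algebra.subset_adjoin ⟨v i, hv i, rfl⟩

theorem map_eq_self_of_mem_adjoin {p : Submodule K X} (g : X →ₗ[K] X) (hg : ∀ x ∈ p, g x = x)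
    {a : ExteriorAlgebra K X} (ha : a ∈ Algebra.adjoin K (ι K '' (p : Set X))) : map g a = a := by
  have hle : Algebra.adjoin K (ι K '' (p : Set X)) ≤ AlgHom.equalizer (map g) (AlgHom.id K _) :=
    Algebra.adjoin_le fun _ ⟨x, hx, hgx⟩ => by simp [← hgx, hg x hx]
  exact hle ha

theorem ιMulti_eq_zero_of_mem_adjoin {n : ℕ} {p : Submodule K X} {v : Fin n → X} {i : Fin n}
    (hi : v i ∉ p) (hv : ιMulti K n v ∈ Algebra.adjoin K (ι K '' (p : Set X))) :
    ιMulti K n v = 0 := by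
  obtain ⟨g, hg, hgi⟩ := p.exists_eqOn_and_apply_eq_zero hi
  rw [← map_eq_self_of_mem_adjoin g hg hv, map_ιMulti_eq_zero g hgi]

theorem exists_eq_ι_mul_of_ι_mul_eq_zero {φ : Module.Dual K X} {x : X} (hx : φ x = 1)
    {a : ExteriorAlgebra K X} (h : ι K x * a = 0) : ∃ b, a = ι K x * b := by
  refine ⟨CliffordAlgebra.contractLeft φ a, ?_⟩
  have hc := CliffordAlgebra.contractLeft_ι_mul (Q := 0) (d := φ) x a
  rw [show CliffordAlgebra.ι (0 : QuadraticForm K X) x = ι K x from rfl, h, map_zero, hx,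
    one_smul] at hc
  exact sub_eq_zero.mp hc.symm

theorem exists_ιMulti_succ_eq_ι_mul_ιMulti (φ : Module.Dual K X) :
    ∀ {n : ℕ} (v : Fin (n + 1) → X),
      ∃ (a : X) (w : Fin n → X), (∀ i, φ (w i) = 0) ∧ ιMulti K (n + 1) v = ι K a * ιMulti K n w
  | 0, v => ⟨v 0, Fin.elim0, fun i => i.elim0, by simp [ιMulti_succ_apply]⟩
  | n + 1, v => by
    obtain ⟨a, w, hw, htail⟩ := exists_ιMulti_succ_eq_ι_mul_ιMulti φ (Matrix.vecTail v)
    rw [ιMulti_succ_apply, htail]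
    by_cases ha : φ a = 0
    · exact ⟨v 0, Matrix.vecCons a w, Fin.cases ha hw, by rw [ιMulti_cons]⟩
    · set t := φ (v 0) / φ a
      refine ⟨-a, Matrix.vecCons (v 0 - t • a) w, Fin.cases ?_ hw, ?_⟩
      · rw [ιMulti_cons, ← mul_assoc, ← mul_assoc, ι_mul_ι_comm (v 0)]
        simp [mul_sub]
      · simp [t, ha]

end ExteriorAlgebra

end Field

section Blade

variable {X : Type*} [AddCommGroup X] [Module ℝ X]

theorem isBlade_iff {B : ExteriorAlgebra ℝ X} :
    IsBlade B ↔ (∃ r, B = algebraMap ℝ _ r) ∨ ∃ (n : ℕ) (v : Fin n → X), B = ιMulti ℝ n v :=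
  Iff.rfl

theorem isBlade_algebraMap (r : ℝ) : IsBlade (algebraMap ℝ (ExteriorAlgebra ℝ X) r) :=
  isBlade_iff.mpr (Or.inl ⟨r, rfl⟩)

theorem isBlade_ιMulti {n : ℕ} (v : Fin n → X) : IsBlade (ιMulti ℝ n v) :=
  isBlade_iff.mpr (Or.inr ⟨n, v, rfl⟩)

theorem IsBlade.map {B : ExteriorAlgebra ℝ X} (hB : IsBlade B) (g : X →ₗ[ℝ] X) :
    IsBlade (map g B) := by
  obtain ⟨r, rfl⟩ | ⟨n, v, rfl⟩ := isBlade_iff.mp hB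
  · rw [AlgHom.commutes]; exact isBlade_algebraMap r
  · rw [map_apply_ιMulti]; exact isBlade_ιMulti _

theorem IsBlade.sub_map_transvection {B : ExteriorAlgebra ℝ X} (hB : IsBlade B)
    (φ : Module.Dual ℝ X) (x : X) : IsBlade (B - ExteriorAlgebra.map (transvection φ (-x)) B) := by
  obtain ⟨r, rfl⟩ | ⟨_ | n, v, rfl⟩ := isBlade_iff.mp hB
  · rw [AlgHom.commutes, sub_self, ← map_zero (algebraMap ℝ _)]; exact isBlade_algebraMap 0
  · rw [ιMulti_zero_apply, map_one, sub_self, ← map_zero (algebraMap ℝ _)]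
    exact isBlade_algebraMap 0
  · obtain ⟨a, w, hw, hv⟩ := exists_ιMulti_succ_eq_ι_mul_ιMulti φ v
    have hfix : transvection φ (-x) ∘ w = w :=
      funext fun i => transvection_apply_of_apply_eq_zero _ (hw i)
    rw [hv, map_mul, map_apply_ι, map_apply_ιMulti, hfix, ← sub_mul, ← map_sub, transvection.apply,
      sub_add_cancel_left, smul_neg, neg_neg, ← ιMulti_cons]
    exact isBlade_ιMulti _

theorem mem_innerSpace {M : ExteriorAlgebra ℝ X} {v : X} :
    v ∈ innerSpace M ↔ ι ℝ v * M = 0 :=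
  Iff.rfl

theorem IsBlade.exists_map_transvection_eq_self {B : ExteriorAlgebra ℝ X} (hB : IsBlade B)
    {x : X} (hx : x ∉ innerSpace B) :
    ∃ φ : Module.Dual ℝ X, φ x = 1 ∧ ExteriorAlgebra.map (transvection φ (-x)) B = B := by
  obtain ⟨r, rfl⟩ | ⟨n, v, rfl⟩ := isBlade_iff.mp hB
  · have hx0 : x ∉ (⊥ : Submodule ℝ X) := by
      intro hx0
      rw [Submodule.mem_bot] at hx0
      simp [hx0] at hx
    obtain ⟨φ, hφx, -⟩ := Submodule.exists_dual_eq_one_and_le_ker hx0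
    exact ⟨φ, hφx, AlgHom.commutes _ r⟩
  · obtain ⟨φ, hφx, hφv⟩ := Submodule.exists_dual_eq_one_and_le_ker
      (mt ι_mul_ιMulti_eq_zero hx)
    refine ⟨φ, hφx, ?_⟩
    rw [map_apply_ιMulti]
    congr
    exact funext fun i => transvection_apply_of_apply_eq_zero _
      (hφv (Submodule.subset_span ⟨i, rfl⟩))

theorem IsBlade.mem_adjoin_outerSpace {B : ExteriorAlgebra ℝ X} (hB : IsBlade B) :
    B ∈ Algebra.adjoin ℝ (ι ℝ '' (outerSpace B : Set X)) := by
  obtain ⟨r, rfl⟩ | ⟨n, v, rfl⟩ := isBlade_iff.mp hB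
  · exact Subalgebra.algebraMap_mem _ r
  by_cases h0 : ιMulti ℝ n v = 0
  · rw [h0]; exact Subalgebra.zero_mem _
  refine ιMulti_mem_adjoin fun i => Submodule.mem_sInf.mpr fun V hV => ?_
  by_contra hi
  exact h0 (ιMulti_eq_zero_of_mem_adjoin hi hV)

theorem outerSpace_sum_le {m : ℕ} {B : Fin m → ExteriorAlgebra ℝ X} (hB : ∀ i, IsBlade (B i)) :
    outerSpace (∑ i, B i) ≤ ⨆ i, outerSpace (B i) := by
  refine sInf_le (Subalgebra.sum_mem (Algebra.adjoin ℝ _) fun i _ => ?_)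
  exact Algebra.adjoin_mono (Set.image_mono (le_iSup (fun i => outerSpace (B i)) i))
    (hB i).mem_adjoin_outerSpace

theorem iInf_innerSpace_le_innerSpace_sum {m : ℕ} (B : Fin m → ExteriorAlgebra ℝ X) :
    ⨅ i, innerSpace (B i) ≤ innerSpace (∑ i, B i) := fun v hv => by
  rw [mem_innerSpace, Finset.mul_sum]
  exact Finset.sum_eq_zero fun i _ => mem_innerSpace.mp (Submodule.mem_iInf _ |>.mp hv i)

end Blade

section MinimalDecomposition

variable {X : Type*} [AddCommGroup X] [Module ℝ X]

structure IsMinimalBladeDecomposition (M : ExteriorAlgebra ℝ X) {m : ℕ}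
    (B : Fin m → ExteriorAlgebra ℝ X) : Prop where
  isBlade : ∀ i, IsBlade (B i)
  eq_sum : M = ∑ i, B i
  le_of_eq_sum : ∀ (k : ℕ) (C : Fin k → ExteriorAlgebra ℝ X),
    (∀ i, IsBlade (C i)) → M = ∑ i, C i → m ≤ k

namespace IsMinimalBladeDecomposition

variable {M : ExteriorAlgebra ℝ X} {m : ℕ} {B : Fin m → ExteriorAlgebra ℝ X}

theorem apply_ne_zero (h : IsMinimalBladeDecomposition M B)
    (T : ExteriorAlgebra ℝ X →ₗ[ℝ] ExteriorAlgebra ℝ X) (hT : ∀ C, IsBlade C → IsBlade (T C))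
    (hTM : T M = M) (i : Fin m) : T (B i) ≠ 0 := by
  intro hTi
  obtain ⟨m', rfl⟩ := Nat.exists_eq_add_one_of_ne_zero i.pos.ne'
  have hM : M = ∑ j : Fin m', T (B (i.succAbove j)) := by
    rw [← hTM, h.eq_sum, map_sum, Fin.sum_univ_succAbove _ i, hTi, zero_add]
  have := h.le_of_eq_sum m' _ (fun j => hT _ (h.isBlade _)) hM
  omega

theorem innerSpace_le (h : IsMinimalBladeDecomposition M B) (i : Fin m) :
    innerSpace M ≤ innerSpace (B i) := by
  intro x hxM
  by_contra hxi
  obtain ⟨φ, hφx, hfix⟩ := (h.isBlade i).exists_map_transvection_eq_self hxi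
  set q := transvection φ (-x)
  obtain ⟨N, hN⟩ := exists_eq_ι_mul_of_ι_mul_eq_zero hφx (mem_innerSpace.mp hxM)
  have hqM : ExteriorAlgebra.map q M = 0 := by
    rw [hN, map_mul, map_apply_ι, transvection_neg_apply_self hφx, map_zero, zero_mul]
  refine h.apply_ne_zero (LinearMap.id - (ExteriorAlgebra.map q).toLinearMap)
    (fun C hC => hC.sub_map_transvection φ x) (by simp [hqM]) i ?_
  simp [hfix]

theorem outerSpace_le (h : IsMinimalBladeDecomposition M B) (i : Fin m) :
    outerSpace (B i) ≤ outerSpace M := by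
  refine le_sInf fun V (hV : M ∈ Algebra.adjoin ℝ _) => sInf_le ?_
  change B i ∈ Algebra.adjoin ℝ _
  obtain ⟨r, hr⟩ | ⟨n, v, hv⟩ := isBlade_iff.mp (h.isBlade i)
  · exact hr ▸ Subalgebra.algebraMap_mem _ r
  by_contra hBi
  obtain ⟨j, hj⟩ : ∃ j, v j ∉ V := by
    by_contra! hall
    exact hBi (hv ▸ ιMulti_mem_adjoin hall)
  obtain ⟨g, hg, hgj⟩ := V.exists_eqOn_and_apply_eq_zero hj
  refine h.apply_ne_zero (ExteriorAlgebra.map g).toLinearMap (fun C hC => hC.map g)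
    (map_eq_self_of_mem_adjoin g hg hV) i ?_
  exact hv ▸ map_ιMulti_eq_zero g hgj

end IsMinimalBladeDecomposition

end MinimalDecomposition

theorem stmt15_general {X : Type*} [NormedAddCommGroup X] [InnerProductSpace ℝ X]
    (M : ExteriorAlgebra ℝ X) {m : ℕ} (B : Fin m → ExteriorAlgebra ℝ X)
    (hblade : ∀ i, IsBlade (B i)) (hsum : M = ∑ i, B i)
    (hmin : ∀ (k : ℕ) (C : Fin k → ExteriorAlgebra ℝ X),
      (∀ i, IsBlade (C i)) → M = ∑ i, C i → m ≤ k) :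
    innerSpace M = ⨅ i, innerSpace (B i) ∧
    outerSpace M = ⨆ i, outerSpace (B i) := by
  have h : IsMinimalBladeDecomposition M B := ⟨hblade, hsum, hmin⟩
  refine ⟨le_antisymm (le_iInf h.innerSpace_le) ?_, le_antisymm ?_ (iSup_le h.outerSpace_le)⟩
  · exact hsum ▸ iInf_innerSpace_le_innerSpace_sum B
  · exact hsum ▸ outerSpace_sum_le hblade

/-- every minimal blade decomposition is balanced. -/
theorem stmt15 {X : Type*} [NormedAddCommGroup X] [InnerProductSpace ℝ X]
    [FiniteDimensional ℝ X]
    (M : ExteriorAlgebra ℝ X) {m : ℕ} (B : Fin m → ExteriorAlgebra ℝ X)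
    (hblade : ∀ i, IsBlade (B i)) (hsum : M = ∑ i, B i)
    (hmin : ∀ (k : ℕ) (C : Fin k → ExteriorAlgebra ℝ X),
      (∀ i, IsBlade (C i)) → M = ∑ i, C i → m ≤ k) :
    innerSpace M = ⨅ i, innerSpace (B i) ∧
    outerSpace M = ⨆ i, outerSpace (B i) :=
  stmt15_general M B hblade hsum hmin
end
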